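/- The complete elliptic integrals K(k) := ∫₀¹ dx / (√(1−x²)·√(1−k²x²)) and E(k) := ∫₀¹ √(1−k²x²)/√(1−x²) dx satisfy, for k ∈ (0,1): K′(k) = (E(k) − (1−k²)K(k)) / (k(1−k²)) and E′(k) = (E(k) − K(k)) / k. -/

import Mathlib

/-- The complete elliptic integral of the first kind,
`K(k) = ∫₀¹ dx / (√(1−x²)·√(1−k²x²))`. -/
noncomputable def ellipticK (k : ℝ) : ℝ :=
  ∫ x in (0:ℝ)..1, 1 / (Real.sqrt (1 - x ^ 2) * Real.sqrt (1 - k ^ 2 * x ^ 2))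

/-- The complete elliptic integral of the second kind,
`E(k) = ∫₀¹ √(1−k²x²)/√(1−x²) dx`. -/
noncomputable def ellipticE (k : ℝ) : ℝ :=
  ∫ x in (0:ℝ)..1, Real.sqrt (1 - k ^ 2 * x ^ 2) / Real.sqrt (1 - x ^ 2)
open Real Set intervalIntegral Function
open scoped Interval

/-!
The substitution `x = sin θ` turns `K` and `E` into `∫₀^{π/2} Δ⁻¹` and `∫₀^{π/2} Δ` with
`Δ = √(1 - k² sin² θ)`. These integrands are smooth in `(k, θ)`, so one may differentiate under
the integral sign, and `k² sin² θ = 1 - Δ²` writes the `k`-derivatives through `Δ`, `Δ⁻¹` and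
`Δ⁻³`. The remaining integral `∫ Δ⁻³` is `E / (1 - k²)` by Legendre's identity
`d/dθ (k² sin θ cos θ / Δ) = Δ - (1 - k²) / Δ³`, whose left side integrates to zero.
-/

open MeasureTheory in
theorem intervalIntegral.hasDerivAt_integral_of_continuousOn {F F' : ℝ → ℝ → ℝ} {U : Set ℝ}
    {x₀ a b : ℝ} (hU : IsOpen U) (hx₀ : x₀ ∈ U)
    (hF : ContinuousOn (uncurry F) (U ×ˢ [[a, b]]))
    (hF' : ContinuousOn (uncurry F') (U ×ˢ [[a, b]]))
    (hderiv : ∀ x ∈ U, ∀ t ∈ [[a, b]], HasDerivAt (F · t) (F' x t) x) :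
    HasDerivAt (fun x => ∫ t in a..b, F x t) (∫ t in a..b, F' x₀ t) x₀ := by
  obtain ⟨r, hr, hrU⟩ := Metric.nhds_basis_closedBall.mem_iff.1 (hU.mem_nhds hx₀)
  obtain ⟨C, hC⟩ := ((isCompact_closedBall x₀ r).prod isCompact_uIcc).exists_bound_of_continuousOn
    (hF'.mono (prod_mono hrU subset_rfl))
  have slice : ∀ {G : ℝ → ℝ → ℝ}, ContinuousOn (uncurry G) (U ×ˢ [[a, b]]) →
      ∀ x ∈ U, ContinuousOn (G x) [[a, b]] := fun hG x hx =>
    hG.comp (Continuous.prodMk_right x).continuousOn fun t ht => ⟨hx, ht⟩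
  have slice_meas : ∀ {G : ℝ → ℝ → ℝ}, ContinuousOn (uncurry G) (U ×ˢ [[a, b]]) →
      ∀ x ∈ U, AEStronglyMeasurable (G x) (volume.restrict (Ι a b)) :=
    fun hG x hx => ((slice hG x hx).mono uIoc_subset_uIcc).aestronglyMeasurable measurableSet_uIoc
  refine (hasDerivAt_integral_of_dominated_loc_of_deriv_le (bound := fun _ => C)
    (Metric.closedBall_mem_nhds x₀ hr) ?_ ((slice hF x₀ hx₀).intervalIntegrable)
    (slice_meas hF' x₀ hx₀) ?_ intervalIntegrable_const ?_).2
  · filter_upwards [hU.mem_nhds hx₀] with x hx using slice_meas hF x hx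
  · exact ae_of_all _ fun t ht x hx => hC (x, t) ⟨hx, uIoc_subset_uIcc ht⟩
  · exact ae_of_all _ fun t ht x hx => hderiv x (hrU hx) t (uIoc_subset_uIcc ht)

theorem integral_zero_one_eq_integral_sin_mul_cos (g : ℝ → ℝ) :
    ∫ x in (0:ℝ)..1, g x = ∫ θ in (0:ℝ)..π / 2, g (sin θ) * cos θ := by
  have := integral_comp_mul_deriv_of_deriv_nonneg (g := g) continuousOn_sin
    (fun θ _ => hasDerivAt_sin θ) fun θ hθ => by
      rw [min_eq_left pi_div_two_pos.le, max_eq_right pi_div_two_pos.le] at hθ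
      exact cos_nonneg_of_mem_Icc ⟨by linarith [hθ.1, pi_pos], hθ.2.le⟩
  simpa using this.symm

noncomputable def ellipticDelta (k θ : ℝ) : ℝ := √(1 - k ^ 2 * sin θ ^ 2)

section ellipticDelta

variable {k : ℝ}

theorem one_sub_sq_mul_sin_sq_pos (hk : k ^ 2 < 1) (θ : ℝ) : 0 < 1 - k ^ 2 * sin θ ^ 2 := by
  nlinarith [sin_sq_le_one θ, sq_nonneg k, sq_nonneg (sin θ)]

theorem ellipticDelta_pos (hk : k ^ 2 < 1) (θ : ℝ) : 0 < ellipticDelta k θ :=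
  sqrt_pos.2 (one_sub_sq_mul_sin_sq_pos hk θ)

theorem ellipticDelta_sq (hk : k ^ 2 ≤ 1) (θ : ℝ) :
    ellipticDelta k θ ^ 2 = 1 - k ^ 2 * sin θ ^ 2 :=
  sq_sqrt (by nlinarith [sin_sq_le_one θ, sq_nonneg k, sq_nonneg (sin θ)])

theorem continuous_uncurry_ellipticDelta : Continuous (uncurry ellipticDelta) := by
  unfold ellipticDelta; fun_prop

theorem continuous_ellipticDelta (k : ℝ) : Continuous (ellipticDelta k) := by
  unfold ellipticDelta; fun_prop

theorem continuous_inv_ellipticDelta (hk : k ^ 2 < 1) :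
    Continuous fun θ => (ellipticDelta k θ)⁻¹ :=
  (continuous_ellipticDelta k).inv₀ fun θ => (ellipticDelta_pos hk θ).ne'

theorem continuous_inv_ellipticDelta_pow_three (hk : k ^ 2 < 1) :
    Continuous fun θ => (ellipticDelta k θ ^ 3)⁻¹ :=
  ((continuous_ellipticDelta k).pow 3).inv₀ fun θ => pow_ne_zero 3 (ellipticDelta_pos hk θ).ne'

theorem ellipticK_eq_integral_ellipticDelta (k : ℝ) :
    ellipticK k = ∫ θ in (0:ℝ)..π / 2, (ellipticDelta k θ)⁻¹ := by
  rw [ellipticK, integral_zero_one_eq_integral_sin_mul_cos]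
  refine integral_congr_Ioo_of_le (by positivity) fun θ hθ => ?_
  have hcos : 0 < cos θ := cos_pos_of_mem_Ioo ⟨by linarith [hθ.1, pi_pos], hθ.2⟩
  rw [← cos_eq_sqrt_one_sub_sin_sq (by linarith [hθ.1, pi_pos]) hθ.2.le, ellipticDelta]
  field_simp

theorem ellipticE_eq_integral_ellipticDelta (k : ℝ) :
    ellipticE k = ∫ θ in (0:ℝ)..π / 2, ellipticDelta k θ := by
  rw [ellipticE, integral_zero_one_eq_integral_sin_mul_cos]
  refine integral_congr_Ioo_of_le (by positivity) fun θ hθ => ?_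
  have hcos : 0 < cos θ := cos_pos_of_mem_Ioo ⟨by linarith [hθ.1, pi_pos], hθ.2⟩
  rw [← cos_eq_sqrt_one_sub_sin_sq (by linarith [hθ.1, pi_pos]) hθ.2.le, ellipticDelta]
  field_simp

theorem hasDerivAt_ellipticDelta_modulus (hk0 : k ≠ 0) (hk : k ^ 2 < 1) (θ : ℝ) :
    HasDerivAt (ellipticDelta · θ) ((ellipticDelta k θ - (ellipticDelta k θ)⁻¹) / k) k := by
  have hΔ := ellipticDelta_pos hk θ
  have hsq := ellipticDelta_sq hk.le θ
  have h := (((hasDerivAt_pow 2 k).mul_const (sin θ ^ 2)).const_sub 1).sqrt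
    (one_sub_sq_mul_sin_sq_pos hk θ).ne'
  refine h.congr_deriv ?_
  rw [← ellipticDelta]
  field_simp
  linear_combination (-2) * hsq

theorem hasDerivAt_inv_ellipticDelta_modulus (hk0 : k ≠ 0) (hk : k ^ 2 < 1) (θ : ℝ) :
    HasDerivAt (fun k => (ellipticDelta k θ)⁻¹)
      (((ellipticDelta k θ ^ 3)⁻¹ - (ellipticDelta k θ)⁻¹) / k) k := by
  have hΔ := ellipticDelta_pos hk θ
  refine ((hasDerivAt_ellipticDelta_modulus hk0 hk θ).inv hΔ.ne').congr_deriv ?_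
  field_simp
  ring

theorem hasDerivAt_ellipticDelta_angle (hk : k ^ 2 < 1) (θ : ℝ) :
    HasDerivAt (ellipticDelta k) (-(k ^ 2 * sin θ * cos θ) / ellipticDelta k θ) θ := by
  have h := (((hasDerivAt_sin θ).fun_pow 2).const_mul (k ^ 2)).const_sub 1 |>.sqrt
    (one_sub_sq_mul_sin_sq_pos hk θ).ne'
  refine h.congr_deriv ?_
  rw [← ellipticDelta]
  field_simp
  ring

theorem integral_ellipticDelta_eq_mul_integral_inv_pow_three (hk : k ^ 2 < 1) :
    ∫ θ in (0:ℝ)..π / 2, ellipticDelta k θ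
      = (1 - k ^ 2) * ∫ θ in (0:ℝ)..π / 2, (ellipticDelta k θ ^ 3)⁻¹ := by
  have hΔ := ellipticDelta_pos hk
  have hcont := continuous_ellipticDelta k
  have hderiv : ∀ θ ∈ [[0, π / 2]], HasDerivAt (fun θ => k ^ 2 * sin θ * cos θ / ellipticDelta k θ)
      (ellipticDelta k θ - (1 - k ^ 2) * (ellipticDelta k θ ^ 3)⁻¹) θ := fun θ _ => by
    refine ((((hasDerivAt_sin θ).const_mul (k ^ 2)).fun_mul (hasDerivAt_cos θ)).div
      (hasDerivAt_ellipticDelta_angle hk θ) (hΔ θ).ne').congr_deriv ?_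
    have hsq := ellipticDelta_sq hk.le θ
    have hΔ' := hΔ θ
    field_simp
    linear_combination (-(ellipticDelta k θ ^ 2 + 1 - k ^ 2 + k ^ 2 * sin θ ^ 2)) * hsq
      + (k ^ 2 * ellipticDelta k θ ^ 2 + k ^ 4 * sin θ ^ 2) * sin_sq_add_cos_sq θ
  have hint_inv := (continuous_inv_ellipticDelta_pow_three hk).intervalIntegrable
    (μ := MeasureTheory.volume) 0 (π / 2)
  have h := integral_eq_sub_of_hasDerivAt hderiv
    ((hcont.intervalIntegrable _ _).sub (hint_inv.const_mul _))
  rw [integral_sub (hcont.intervalIntegrable _ _) (hint_inv.const_mul _), integral_const_mul] at h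
  simpa [sub_eq_zero] using h

end ellipticDelta

section derivatives

variable {k : ℝ}

theorem hasDerivAt_ellipticE (hk : k ∈ Ioo 0 1) :
    HasDerivAt ellipticE ((ellipticE k - ellipticK k) / k) k := by
  have hk2 : k ^ 2 < 1 := pow_lt_one₀ hk.1.le hk.2 two_ne_zero
  have hΔ : ContinuousOn (uncurry ellipticDelta) (Ioo 0 1 ×ˢ [[0, π / 2]]) :=
    continuous_uncurry_ellipticDelta.continuousOn
  have hΔne : ∀ p ∈ Ioo 0 1 ×ˢ [[0, π / 2]], uncurry ellipticDelta p ≠ 0 := fun p hp =>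
    (ellipticDelta_pos (pow_lt_one₀ hp.1.1.le hp.1.2 two_ne_zero) p.2).ne'
  have hF' : ContinuousOn (uncurry fun k θ => (ellipticDelta k θ - (ellipticDelta k θ)⁻¹) / k)
      (Ioo 0 1 ×ˢ [[0, π / 2]]) :=
    (hΔ.sub (hΔ.inv₀ hΔne)).div continuousOn_fst fun p hp => hp.1.1.ne'
  have h := hasDerivAt_integral_of_continuousOn isOpen_Ioo hk hΔ hF' fun k hk θ _ =>
    hasDerivAt_ellipticDelta_modulus hk.1.ne' (pow_lt_one₀ hk.1.le hk.2 two_ne_zero) θ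
  convert h using 1
  · exact funext ellipticE_eq_integral_ellipticDelta
  · rw [integral_div, integral_sub ((continuous_ellipticDelta k).intervalIntegrable _ _)
      ((continuous_inv_ellipticDelta hk2).intervalIntegrable _ _),
      ← ellipticE_eq_integral_ellipticDelta, ← ellipticK_eq_integral_ellipticDelta]

theorem hasDerivAt_ellipticK (hk : k ∈ Ioo 0 1) :
    HasDerivAt ellipticK ((ellipticE k - (1 - k ^ 2) * ellipticK k) / (k * (1 - k ^ 2))) k := by
  have hk2 : k ^ 2 < 1 := pow_lt_one₀ hk.1.le hk.2 two_ne_zero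
  have hΔ : ContinuousOn (uncurry ellipticDelta) (Ioo 0 1 ×ˢ [[0, π / 2]]) :=
    continuous_uncurry_ellipticDelta.continuousOn
  have hΔne : ∀ p ∈ Ioo 0 1 ×ˢ [[0, π / 2]], uncurry ellipticDelta p ≠ 0 := fun p hp =>
    (ellipticDelta_pos (pow_lt_one₀ hp.1.1.le hp.1.2 two_ne_zero) p.2).ne'
  have hF : ContinuousOn (uncurry fun k θ => (ellipticDelta k θ)⁻¹) (Ioo 0 1 ×ˢ [[0, π / 2]]) :=
    hΔ.inv₀ hΔne
  have hF' : ContinuousOn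
      (uncurry fun k θ => ((ellipticDelta k θ ^ 3)⁻¹ - (ellipticDelta k θ)⁻¹) / k)
      (Ioo 0 1 ×ˢ [[0, π / 2]]) :=
    (((hΔ.pow 3).inv₀ fun p hp => pow_ne_zero 3 (hΔne p hp)).sub hF).div continuousOn_fst
      fun p hp => hp.1.1.ne'
  have h := hasDerivAt_integral_of_continuousOn isOpen_Ioo hk hF hF' fun k hk θ _ =>
    hasDerivAt_inv_ellipticDelta_modulus hk.1.ne' (pow_lt_one₀ hk.1.le hk.2 two_ne_zero) θ
  have hLegendre := integral_ellipticDelta_eq_mul_integral_inv_pow_three hk2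
  rw [← ellipticE_eq_integral_ellipticDelta] at hLegendre
  convert h using 1
  · exact funext ellipticK_eq_integral_ellipticDelta
  · rw [integral_div, integral_sub ((continuous_inv_ellipticDelta_pow_three hk2).intervalIntegrable _ _)
      ((continuous_inv_ellipticDelta hk2).intervalIntegrable _ _),
      ← ellipticK_eq_integral_ellipticDelta, hLegendre]
    have : 1 - k ^ 2 ≠ 0 := by linarith
    field_simp

end derivatives

theorem stmt14 (k : ℝ) (hk : k ∈ Set.Ioo (0:ℝ) 1) :
    HasDerivAt ellipticK ((ellipticE k - (1 - k ^ 2) * ellipticK k) / (k * (1 - k ^ 2))) k ∧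
    HasDerivAt ellipticE ((ellipticE k - ellipticK k) / k) k :=
  ⟨hasDerivAt_ellipticK hk, hasDerivAt_ellipticE hk⟩
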